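/- In the Pinkall–Thorbergsson construction, for z ∈ M_+^t and 1 ≤ α ≤ m, the shape operator A_α of M_+^t ⊂ S^{2l-1}(1) with respect to the unit normal Q_α z, given by A_α X = -(Q_α X)^T for tangent vectors X, has eigenvalues 1, 0, -1 with multiplicities l-m-1, m, l-m-1, respectively. -/

import Mathlib

open Matrix Real

noncomputable section

/-- The matrix `Q₀ = diag(tan t · Id, -cot t · Id)` on `ℝ^l ⊕ ℝ^l`. -/
def ptQzero (l : ℕ) (t : ℝ) : Matrix (Fin l ⊕ Fin l) (Fin l ⊕ Fin l) ℝ :=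
  Matrix.fromBlocks (Real.tan t • 1) 0 0 (-(Real.cot t • 1))

/-- A matrix on `ℝ^l ⊕ ℝ^l` acting on the corresponding Euclidean space. -/
def matLin {l : ℕ} (A : Matrix (Fin l ⊕ Fin l) (Fin l ⊕ Fin l) ℝ) :
    EuclideanSpace ℝ (Fin l ⊕ Fin l) →ₗ[ℝ] EuclideanSpace ℝ (Fin l ⊕ Fin l) :=
  Matrix.toEuclideanLin A

/-- The tangent space `T_z M₊ᵗ`, i.e. the orthogonal complement of
`span{z, Q₀z, ..., Q_m z}` in `ℝ^{2l}`. -/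
def ptTangent {l m : ℕ} (Q : Fin (m + 1) → Matrix (Fin l ⊕ Fin l) (Fin l ⊕ Fin l) ℝ)
    (z : EuclideanSpace ℝ (Fin l ⊕ Fin l)) : Submodule ℝ (EuclideanSpace ℝ (Fin l ⊕ Fin l)) :=
  (Submodule.span ℝ (insert z (Set.range fun α => matLin (Q α) z)))ᗮ

/-- The shape operator `A X = -(Q X)ᵀ` (tangential projection) on the tangent space `T`. -/
def shapeOp {l : ℕ} (T : Submodule ℝ (EuclideanSpace ℝ (Fin l ⊕ Fin l)))
    (A : Matrix (Fin l ⊕ Fin l) (Fin l ⊕ Fin l) ℝ) : T →ₗ[ℝ] T :=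
  -(((T.orthogonalProjectionOnto).toLinearMap).comp ((matLin A).comp T.subtype))

/-!
Write `S = Q_α`, `T = T_z M₊ᵗ` and `A` for the shape operator. `S` is a symmetric involution
anticommuting with `P₀`, so both of its eigenspaces are `l`-dimensional. Since `Q₀ = c + d P₀` with
`d² - c² = tan t cot t = 1`, the family `Q` satisfies the deformed Clifford relations
`Q_β Q_γ + Q_γ Q_β = 2δ_{βγ} + 2c (δ_{β0} Q_γ + δ_{γ0} Q_β)`; evaluated on `z` they show that
`z, Q₀ z, …, Q_m z` is orthonormal and that `⟪Q_β z, S Q_γ z⟫ = 0`.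

An `ε`-eigenvector of `S` orthogonal to the `m + 1` vectors `Q_β z` is also orthogonal to `z`
(because `Q_α z = S z`), hence tangent, and `A` acts on it by `-ε`: each of `∓1` has multiplicity
at least `l - m - 1`. The `m` orthonormal tangent vectors `S Q_β z`, `β ≠ α`, are mapped by `S`
back into the normal space, so they lie in `ker A`. These lower bounds add up to
`dim T = 2l - m - 2`, so all of them are equalities.
-/

open Module Module.End Submodule
open scoped RealInnerProductSpace

section Eigenspaces

variable {K V : Type*} [Field K] [AddCommGroup V] [Module K V] [FiniteDimensional K V]

theorem Module.End.finrank_eigenspace_add_add_le (f : End K V) {a b c : K}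
    (hab : a ≠ b) (hac : a ≠ c) (hbc : b ≠ c) :
    finrank K (f.eigenspace a) + finrank K (f.eigenspace b) + finrank K (f.eigenspace c) ≤
      finrank K V := by
  have hind := f.eigenspaces_iSupIndep
  have hdisj_ab : Disjoint (f.eigenspace a) (f.eigenspace b) := hind.pairwiseDisjoint hab
  have hdisj_c : Disjoint (f.eigenspace a ⊔ f.eigenspace b) (f.eigenspace c) := by
    have h := hind.disjoint_biSup (x := c) (y := {a, b}) (by simp [hac.symm, hbc.symm])
    rw [iSup_pair] at h
    exact h.symm
  calc _ = finrank K ↥(f.eigenspace a ⊔ f.eigenspace b) + finrank K (f.eigenspace c) := by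
        rw [← Submodule.finrank_sup_add_finrank_inf_eq, hdisj_ab.eq_bot, finrank_bot, add_zero]
    _ ≤ finrank K V := Submodule.finrank_add_finrank_le_of_disjoint hdisj_c

theorem Module.End.finrank_eigenspace_one_add_finrank_eigenspace_neg_one {S : End K V}
    (hS : S * S = 1) (h2 : (2 : K) ≠ 0) :
    finrank K (S.eigenspace 1) + finrank K (S.eigenspace (-1)) = finrank K V := by
  refine Submodule.finrank_add_eq_of_isCompl ⟨?_, ?_⟩
  · refine S.eigenspaces_iSupIndep.pairwiseDisjoint fun h => h2 ?_
    linear_combination h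
  · rw [codisjoint_iff, eq_top_iff]
    intro v _
    have hSS : S (S v) = v := LinearMap.congr_fun hS v
    have hv : v = (2 : K)⁻¹ • (v + S v) + (2 : K)⁻¹ • (v - S v) := by
      rw [← smul_add, add_add_sub_cancel, ← two_smul K v, smul_smul, inv_mul_cancel₀ h2,
        one_smul]
    rw [hv]
    refine Submodule.add_mem_sup (Submodule.smul_mem _ _ ?_) (Submodule.smul_mem _ _ ?_)
    all_goals
      simp only [mem_eigenspace_iff, map_add, map_sub, hSS]
      module

theorem Module.End.finrank_eigenspace_le_of_anticomm {S J : End K V} (hJ : J * J = 1)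
    (hJS : J * S = -(S * J)) (μ : K) :
    finrank K (S.eigenspace μ) ≤ finrank K (S.eigenspace (-μ)) := by
  have hle : S.eigenspace μ ≤ (S.eigenspace (-μ)).map J := by
    intro v hv
    refine ⟨J v, ?_, LinearMap.congr_fun hJ v⟩
    rw [SetLike.mem_coe, mem_eigenspace_iff]
    rw [mem_eigenspace_iff] at hv
    rw [← Module.End.mul_apply, ← neg_neg (S * J), ← hJS, LinearMap.neg_apply,
      Module.End.mul_apply, hv, map_smul, neg_smul]
  exact (Submodule.finrank_mono hle).trans (Submodule.finrank_map_le J _)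

theorem Module.End.two_mul_finrank_eigenspace_of_anticomm {S J : End K V} (hS : S * S = 1)
    (hJ : J * J = 1) (hJS : J * S = -(S * J)) (h2 : (2 : K) ≠ 0) {ε : K}
    (hε : ε = 1 ∨ ε = -1) :
    2 * finrank K (S.eigenspace ε) = finrank K V := by
  have hsum := finrank_eigenspace_one_add_finrank_eigenspace_neg_one hS h2
  have h1 := finrank_eigenspace_le_of_anticomm hJ hJS 1
  have h2 := finrank_eigenspace_le_of_anticomm hJ hJS (-1)
  rw [neg_neg] at h2
  rcases hε with rfl | rfl <;> omega

theorem Module.End.finrank_le_finrank_eigenspace_of_le {T W : Submodule K V} (hWT : W ≤ T)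
    {A : End K T} {μ : K} (hA : ∀ x : T, (x : V) ∈ W → A x = μ • x) :
    finrank K W ≤ finrank K (A.eigenspace μ) := by
  rw [← (Submodule.comapSubtypeEquivOfLe hWT).finrank_eq]
  exact Submodule.finrank_mono fun x hx => mem_eigenspace_iff.mpr (hA x hx)

end Eigenspaces

section ShapeOperator

variable {E : Type*} [NormedAddCommGroup E] [InnerProductSpace ℝ E]

theorem Orthonormal.optionElim {ι : Type*} {n : ι → E} (hn : Orthonormal ℝ n) {z : E}
    (hz : ‖z‖ = 1) (hzn : ∀ β, ⟪z, n β⟫ = 0) :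
    Orthonormal ℝ (fun o : Option ι => o.elim z n) := by
  classical
  rw [orthonormal_iff_ite] at hn ⊢
  rintro (_ | β) (_ | γ)
  · simp [hz]
  · simpa using hzn γ
  · simpa [real_inner_comm] using hzn β
  · simpa using hn β γ

theorem Submodule.mem_orthogonal_span_iff {s : Set E} {u : E} :
    u ∈ (span ℝ s)ᗮ ↔ ∀ v ∈ s, ⟪v, u⟫ = 0 :=
  ⟨fun h _ hv => inner_right_of_mem_orthogonal (subset_span hv) h, fun h =>
    (isOrtho_span.mpr fun v hv w hw => by rw [Set.mem_singleton_iff.mp hw]; exact h v hv).ge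
      (mem_span_singleton_self u)⟩

variable [FiniteDimensional ℝ E]

def shapeOperator (T : Submodule ℝ E) (S : End ℝ E) : End ℝ T :=
  -(T.orthogonalProjectionOnto.toLinearMap ∘ₗ S ∘ₗ T.subtype)

theorem shapeOperator_apply_eq_neg_smul {T : Submodule ℝ E} {S : End ℝ E} {x : T} {μ : ℝ}
    (h : S x = μ • (x : E)) : shapeOperator T S x = (-μ) • x := by
  simp only [shapeOperator, LinearMap.neg_apply, LinearMap.comp_apply, Submodule.subtype_apply,
    ContinuousLinearMap.coe_coe, h, ← Submodule.coe_smul,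
    orthogonalProjectionOnto_mem_subspace_eq_self, neg_smul]

theorem shapeOperator_apply_eq_zero {T : Submodule ℝ E} {S : End ℝ E} {x : T}
    (h : S x ∈ Tᗮ) : shapeOperator T S x = 0 := by
  simp only [shapeOperator, LinearMap.neg_apply, LinearMap.comp_apply, Submodule.subtype_apply,
    ContinuousLinearMap.coe_coe, orthogonalProjectionOnto_apply_of_mem_orthogonal h, neg_zero]

theorem Submodule.finrank_le_finrank_inf_orthogonal_add (U W : Submodule ℝ E) :
    finrank ℝ U ≤ finrank ℝ ↥(U ⊓ Wᗮ) + finrank ℝ W := by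
  have h₁ := Submodule.finrank_sup_add_finrank_inf_eq U Wᗮ
  have h₂ := W.finrank_add_finrank_orthogonal
  have h₃ := Submodule.finrank_le (U ⊔ Wᗮ)
  omega

variable {ι : Type*} [Fintype ι] (S : End ℝ E) (z : E) (n : ι → E)

theorem finrank_orthogonal_span_insert (hn : Orthonormal ℝ n) (hz : ‖z‖ = 1)
    (hzn : ∀ β, ⟪z, n β⟫ = 0) :
    finrank ℝ (span ℝ (insert z (Set.range n)))ᗮ + (Fintype.card ι + 1) = finrank ℝ E := by
  have hN : finrank ℝ (span ℝ (insert z (Set.range n))) = Fintype.card ι + 1 := by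
    rw [← Option.range_elim, finrank_span_eq_card (hn.optionElim hz hzn).linearIndependent,
      Fintype.card_option]
  rw [← hN, add_comm]
  exact Submodule.finrank_add_finrank_orthogonal _

theorem le_finrank_eigenspace_shapeOperator_neg (hS : S.IsSymmetric) {α : ι} (hnα : n α = S z)
    {ε : ℝ} (hε : ε ≠ 0) :
    finrank ℝ (S.eigenspace ε) ≤
      finrank ℝ ((shapeOperator (span ℝ (insert z (Set.range n)))ᗮ S).eigenspace (-ε)) +
        Fintype.card ι := by
  set W := span ℝ (Set.range n)
  have hWT : S.eigenspace ε ⊓ Wᗮ ≤ (span ℝ (insert z (Set.range n)))ᗮ := by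
    rintro u ⟨huS, huW⟩
    rw [SetLike.mem_coe, mem_eigenspace_iff] at huS
    have hnu : ∀ β, ⟪n β, u⟫ = 0 := fun β => mem_orthogonal_span_iff.mp huW _ ⟨β, rfl⟩
    -- `u ⊥ n α = S z` and `S u = ε u` force `u ⊥ z`
    have hzu : ⟪z, u⟫ = 0 := by
      have h := hnu α
      rw [hnα, hS, huS, real_inner_smul_right] at h
      exact (mul_eq_zero.mp h).resolve_left hε
    refine mem_orthogonal_span_iff.mpr ?_
    rintro v (rfl | ⟨β, rfl⟩)
    exacts [hzu, hnu β]
  calc finrank ℝ (S.eigenspace ε)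
      ≤ finrank ℝ ↥(S.eigenspace ε ⊓ Wᗮ) + finrank ℝ W :=
        finrank_le_finrank_inf_orthogonal_add _ _
    _ ≤ _ := by
      gcongr
      · exact finrank_le_finrank_eigenspace_of_le hWT fun x hx =>
          shapeOperator_apply_eq_neg_smul (mem_eigenspace_iff.mp hx.1)
      · exact finrank_range_le_card n

theorem le_finrank_eigenspace_shapeOperator_zero (hS : S.IsSymmetric) (hSS : S * S = 1)
    (hn : Orthonormal ℝ n) {α : ι} (hnα : n α = S z) (hSn : ∀ β γ, ⟪n β, S (n γ)⟫ = 0) :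
    Fintype.card ι ≤
      finrank ℝ ((shapeOperator (span ℝ (insert z (Set.range n)))ᗮ S).eigenspace 0) + 1 := by
  classical
  set T := (span ℝ (insert z (Set.range n)))ᗮ
  have hSS_apply : ∀ x, S (S x) = x := fun x => LinearMap.congr_fun hSS x
  let k : {β // β ≠ α} → E := fun β => S (n β)
  have hk : Orthonormal ℝ k := by
    rw [orthonormal_iff_ite] at hn ⊢
    intro β γ
    rw [hS, hSS_apply, hn]
    exact if_congr Subtype.ext_iff.symm rfl rfl
  have hKT : span ℝ (Set.range k) ≤ T := by
    rw [span_le]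
    rintro _ ⟨β, rfl⟩
    refine mem_orthogonal_span_iff.mpr ?_
    rintro v (rfl | ⟨γ, rfl⟩)
    · rw [← hS, ← hnα, real_inner_comm, orthonormal_iff_ite.mp hn, if_neg β.2]
    · exact hSn γ β
  -- `S` maps each `k β` back into the normal space `Tᗮ`
  have hSK : (span ℝ (Set.range k)).map S ≤ Tᗮ := by
    rw [map_span, span_le]
    rintro _ ⟨_, ⟨β, rfl⟩, rfl⟩
    rw [hSS_apply]
    exact le_orthogonal_orthogonal _ (subset_span (Set.mem_insert_of_mem _ ⟨β, rfl⟩))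
  have hK : finrank ℝ (span ℝ (Set.range k)) + 1 = Fintype.card ι := by
    rw [finrank_span_eq_card hk.linearIndependent, Fintype.card_subtype_compl,
      Fintype.card_subtype_eq]
    have := Fintype.card_pos_iff.mpr ⟨α⟩
    omega
  have hker := finrank_le_finrank_eigenspace_of_le hKT (A := shapeOperator T S) (μ := 0)
    fun x hx => by rw [zero_smul]; exact shapeOperator_apply_eq_zero (hSK ⟨x, hx, rfl⟩)
  omega

theorem finrank_eigenspace_shapeOperator_of_frame (hS : S.IsSymmetric) (hSS : S * S = 1)
    {J : End ℝ E} (hJ : J * J = 1) (hJS : J * S = -(S * J)) (hz : ‖z‖ = 1)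
    (hzn : ∀ β, ⟪z, n β⟫ = 0) (hn : Orthonormal ℝ n) {α : ι} (hnα : n α = S z)
    (hSn : ∀ β γ, ⟪n β, S (n γ)⟫ = 0) :
    finrank ℝ ((shapeOperator (span ℝ (insert z (Set.range n)))ᗮ S).eigenspace 1) =
        finrank ℝ E / 2 - Fintype.card ι ∧
      finrank ℝ ((shapeOperator (span ℝ (insert z (Set.range n)))ᗮ S).eigenspace 0) =
        Fintype.card ι - 1 ∧
      finrank ℝ ((shapeOperator (span ℝ (insert z (Set.range n)))ᗮ S).eigenspace (-1)) =
        finrank ℝ E / 2 - Fintype.card ι := by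
  have hT := finrank_orthogonal_span_insert z n hn hz hzn
  have hU₁ := two_mul_finrank_eigenspace_of_anticomm hSS hJ hJS two_ne_zero (ε := 1) (.inl rfl)
  have hU₂ := two_mul_finrank_eigenspace_of_anticomm hSS hJ hJS two_ne_zero (ε := -1) (.inr rfl)
  have h₁ := le_finrank_eigenspace_shapeOperator_neg S z n hS hnα (ε := -1) (by norm_num)
  have h₂ := le_finrank_eigenspace_shapeOperator_neg S z n hS hnα (ε := 1) one_ne_zero
  have h₀ := le_finrank_eigenspace_shapeOperator_zero S z n hS hSS hn hnα hSn
  have hsum := finrank_eigenspace_add_add_le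
    (shapeOperator (span ℝ (insert z (Set.range n)))ᗮ S) (a := 1) (b := 0) (c := -1)
    one_ne_zero (by norm_num) (by norm_num)
  rw [neg_neg] at h₁
  omega

end ShapeOperator

section Clifford

variable {R : Type*} [Ring R] [Algebra ℝ R] {ι : Type*} [DecidableEq ι]

def IsCliffordFamily (P : ι → R) : Prop :=
  ∀ β γ, P β * P γ + P γ * P β = if β = γ then (2 : ℝ) • 1 else 0

theorem IsCliffordFamily.mul_self_eq_one {P : ι → R} (hP : IsCliffordFamily P) (β : ι) :
    P β * P β = 1 := by
  have h := hP β β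
  rw [if_pos rfl, ← two_smul ℝ] at h
  exact smul_right_injective R two_ne_zero h

theorem IsCliffordFamily.anticomm {P : ι → R} (hP : IsCliffordFamily P) {β γ : ι}
    (h : β ≠ γ) : P β * P γ = -(P γ * P β) := by
  have h' := hP β γ
  rw [if_neg h] at h'
  exact eq_neg_of_add_eq_zero_left h'

def IsDeformedClifford (Q : ι → R) (o : ι) (c : ℝ) : Prop :=
  ∀ β γ, Q β * Q γ + Q γ * Q β = (if β = γ then (2 : ℝ) • 1 else 0) +
    (2 * c) • ((if β = o then Q γ else 0) + (if γ = o then Q β else 0))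

theorem IsCliffordFamily.isDeformedClifford {P Q : ι → R} (hP : IsCliffordFamily P) {o : ι}
    {c d : ℝ} (hcd : d ^ 2 - c ^ 2 = 1) (hQo : Q o = c • 1 + d • P o)
    (hQ : ∀ β ≠ o, Q β = P β) : IsDeformedClifford Q o c := by
  intro β γ
  have hPo := hP.mul_self_eq_one o
  by_cases hβ : β = o <;> by_cases hγ : γ = o
  · subst hβ hγ
    simp only [if_pos, hQo, add_mul, mul_add, smul_mul_smul_comm, one_mul, mul_one, hPo]
    linear_combination (norm := module) (2 : ℝ) • hcd • (1 : R)
  · subst hβ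
    have h := hP β γ
    rw [if_neg (Ne.symm hγ)] at h
    simp only [if_pos, if_neg hγ, if_neg (Ne.symm hγ), hQo, hQ γ hγ, add_mul, mul_add,
      smul_mul_assoc, mul_smul_comm, one_mul, mul_one]
    linear_combination (norm := module) d • h
  · subst hγ
    have h := hP β γ
    rw [if_neg hβ] at h
    simp only [if_pos, if_neg hβ, hQo, hQ β hβ, add_mul, mul_add, smul_mul_assoc,
      mul_smul_comm, one_mul, mul_one]
    linear_combination (norm := module) d • h
  · simp only [if_neg hβ, if_neg hγ, hQ β hβ, hQ γ hγ, add_zero, smul_zero]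
    exact hP β γ

variable {Q : ι → R} {o : ι} {c : ℝ}

theorem IsDeformedClifford.mul_self_eq_one (hQ : IsDeformedClifford Q o c) {α : ι}
    (hα : α ≠ o) : Q α * Q α = 1 := by
  have h := hQ α α
  simp only [if_pos, if_neg hα, add_zero, smul_zero, ← two_smul ℝ (Q α * Q α)] at h
  exact smul_right_injective R two_ne_zero h

theorem IsDeformedClifford.mul_mul_add_mul_mul (hQ : IsDeformedClifford Q o c) {α β γ : ι}
    (hα : α ≠ o) (hβ : β ≠ α) (hγ : γ ≠ α) :
    Q β * Q α * Q γ + Q γ * Q α * Q β = -((if β = γ then (2 : ℝ) • 1 else 0) * Q α) := by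
  calc Q β * Q α * Q γ + Q γ * Q α * Q β
      = (Q β * Q α + Q α * Q β) * Q γ + (Q γ * Q α + Q α * Q γ) * Q β -
          Q α * (Q β * Q γ + Q γ * Q β) := by noncomm_ring
    _ = _ := by
      rw [hQ β α, hQ γ α, hQ β γ]
      simp only [if_neg hβ, if_neg hγ, if_neg hα]
      split_ifs <;> simp only [mul_add, smul_mul_assoc, mul_smul_comm, zero_add,
        add_zero, smul_zero, zero_mul, mul_zero, one_mul, mul_one, neg_zero] <;> module

end Clifford

section CliffordInner

variable {E : Type*} [NormedAddCommGroup E] [InnerProductSpace ℝ E]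

theorem LinearMap.IsSymmetric.inner_mul_add_mul_apply {X Y : End ℝ E} (hX : X.IsSymmetric)
    (hY : Y.IsSymmetric) (z : E) : ⟪z, (X * Y + Y * X) z⟫ = 2 * ⟪X z, Y z⟫ := by
  rw [LinearMap.add_apply, inner_add_right, Module.End.mul_apply, Module.End.mul_apply,
    ← hX z (Y z), ← hY z (X z), real_inner_comm (X z)]
  ring

theorem LinearMap.IsSymmetric.inner_mul_mul_add_mul_mul_apply {X Y W : End ℝ E}
    (hX : X.IsSymmetric) (hY : Y.IsSymmetric) (hW : W.IsSymmetric) (z : E) :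
    ⟪z, (X * Y * W + W * Y * X) z⟫ = 2 * ⟪X z, Y (W z)⟫ := by
  simp only [LinearMap.add_apply, inner_add_right, Module.End.mul_apply]
  rw [← hX z (Y (W z)), ← hW z (Y (X z)), ← hY (W z) (X z), real_inner_comm (X z)]
  ring

variable {ι : Type*} [DecidableEq ι] {Q : ι → End ℝ E} {o : ι} {c : ℝ} {z : E}

theorem IsDeformedClifford.inner_apply_apply (hQ : IsDeformedClifford Q o c)
    (hsymm : ∀ β, (Q β).IsSymmetric) (hz : ‖z‖ = 1) (hzQ : ∀ β, ⟪z, Q β z⟫ = 0) (β γ : ι) :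
    ⟪Q β z, Q γ z⟫ = if β = γ then 1 else 0 := by
  have h := congrArg (fun X : End ℝ E => ⟪z, X z⟫) (hQ β γ)
  simp only [(hsymm β).inner_mul_add_mul_apply (hsymm γ)] at h
  split_ifs at h ⊢ <;> simp [inner_add_right, real_inner_smul_right, hzQ, hz] at h <;> linarith

theorem IsDeformedClifford.inner_apply_apply_apply (hQ : IsDeformedClifford Q o c)
    (hsymm : ∀ β, (Q β).IsSymmetric) (hzQ : ∀ β, ⟪z, Q β z⟫ = 0) {α : ι} (hα : α ≠ o)
    (β γ : ι) : ⟪Q β z, Q α (Q γ z)⟫ = 0 := by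
  have hαα : ∀ x, Q α (Q α x) = x := fun x => LinearMap.congr_fun (hQ.mul_self_eq_one hα) x
  by_cases hγ : γ = α
  · rw [hγ, hαα, real_inner_comm, hzQ]
  by_cases hβ : β = α
  · rw [hβ, hsymm α, hαα, hzQ]
  have h := congrArg (fun X : End ℝ E => ⟪z, X z⟫) (hQ.mul_mul_add_mul_mul hα hβ hγ)
  simp only [(hsymm β).inner_mul_mul_add_mul_mul_apply (hsymm α) (hsymm γ)] at h
  split_ifs at h <;> simp [real_inner_smul_right, hzQ] at h <;> linarith

theorem finrank_eigenspace_shapeOperator_of_isCliffordFamily [FiniteDimensional ℝ E] [Fintype ι]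
    {P : ι → End ℝ E} (hPsymm : ∀ β, (P β).IsSymmetric) (hP : IsCliffordFamily P) {d : ℝ}
    (hcd : d ^ 2 - c ^ 2 = 1) (hQo : Q o = c • 1 + d • P o) (hQ : ∀ β ≠ o, Q β = P β)
    (hz : ‖z‖ = 1) (hzQ : ∀ β, ⟪z, Q β z⟫ = 0) {α : ι} (hα : α ≠ o) :
    finrank ℝ ((shapeOperator (span ℝ (insert z (Set.range fun β => Q β z)))ᗮ
        (Q α)).eigenspace 1) = finrank ℝ E / 2 - Fintype.card ι ∧
      finrank ℝ ((shapeOperator (span ℝ (insert z (Set.range fun β => Q β z)))ᗮ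
        (Q α)).eigenspace 0) = Fintype.card ι - 1 ∧
      finrank ℝ ((shapeOperator (span ℝ (insert z (Set.range fun β => Q β z)))ᗮ
        (Q α)).eigenspace (-1)) = finrank ℝ E / 2 - Fintype.card ι := by
  have hQ' := hP.isDeformedClifford hcd hQo hQ
  have hQsymm : ∀ β, (Q β).IsSymmetric := by
    intro β
    by_cases hβ : β = o
    · rw [hβ, hQo]
      exact (LinearMap.IsSymmetric.id.smul (conj_trivial c)).add
        ((hPsymm o).smul (conj_trivial d))
    · rw [hQ β hβ]
      exact hPsymm β
  have hJS : P o * Q α = -(Q α * P o) := by rw [hQ α hα, hP.anticomm (Ne.symm hα)]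
  have hframe : Orthonormal ℝ fun β => Q β z :=
    orthonormal_iff_ite.mpr (hQ'.inner_apply_apply hQsymm hz hzQ)
  exact finrank_eigenspace_shapeOperator_of_frame (Q α) z (fun β => Q β z) (hQsymm α)
    (hQ'.mul_self_eq_one hα) (hP.mul_self_eq_one o) hJS hz hzQ hframe rfl
    (hQ'.inner_apply_apply_apply hQsymm hzQ hα)

end CliffordInner

theorem toLpLinAlgEquiv_eq_matLin {l : ℕ} (A : Matrix (Fin l ⊕ Fin l) (Fin l ⊕ Fin l) ℝ) :
    Matrix.toLpLinAlgEquiv 2 A = matLin A :=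
  rfl

theorem ptQzero_eq_smul_one_add_smul (l : ℕ) (t : ℝ) :
    ptQzero l t = ((tan t - cot t) / 2) • 1 +
      ((tan t + cot t) / 2) • Matrix.fromBlocks 1 0 0 (-1) := by
  rw [ptQzero, ← Matrix.fromBlocks_one, Matrix.fromBlocks_smul, Matrix.fromBlocks_smul,
    Matrix.fromBlocks_add]
  congr 1 <;> module

theorem EuclideanSpace.norm_eq_one_of_sum_inl_inr {l : ℕ} {t : ℝ}
    {z : EuclideanSpace ℝ (Fin l ⊕ Fin l)} (hzx : ∑ i, z (Sum.inl i) ^ 2 = cos t ^ 2)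
    (hzy : ∑ i, z (Sum.inr i) ^ 2 = sin t ^ 2) :
    ‖z‖ = 1 := by
  rw [EuclideanSpace.norm_eq, Fintype.sum_sum_type]
  simp only [Real.norm_eq_abs, sq_abs, hzx, hzy, cos_sq_add_sin_sq, Real.sqrt_one]

theorem statement7_general (l m : ℕ) (t : ℝ) (ht0 : 0 < t) (ht : t ≤ π / 4)
    (P : Fin (m + 1) → Matrix (Fin l ⊕ Fin l) (Fin l ⊕ Fin l) ℝ)
    (hSymm : ∀ α, (P α).IsSymm)
    (hCliff : ∀ α β, P α * P β + P β * P α =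
      if α = β then (2 : ℝ) • (1 : Matrix (Fin l ⊕ Fin l) (Fin l ⊕ Fin l) ℝ) else 0)
    (hP0 : P 0 = Matrix.fromBlocks 1 0 0 (-1))
    (Q : Fin (m + 1) → Matrix (Fin l ⊕ Fin l) (Fin l ⊕ Fin l) ℝ)
    (hQ : Q = fun α => if α = 0 then ptQzero l t else P α)
    (z : EuclideanSpace ℝ (Fin l ⊕ Fin l))
    (hzx : ∑ i, z (Sum.inl i) ^ 2 = Real.cos t ^ 2)
    (hzy : ∑ i, z (Sum.inr i) ^ 2 = Real.sin t ^ 2)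
    (hM : ∀ α, inner ℝ z (matLin (Q α) z) = (0 : ℝ)) :
    ∀ α : Fin (m + 1), α ≠ 0 →
      Module.finrank ℝ
        (Module.End.eigenspace (shapeOp (ptTangent Q z) (Q α)) 1) = l - m - 1 ∧
      Module.finrank ℝ
        (Module.End.eigenspace (shapeOp (ptTangent Q z) (Q α)) 0) = m ∧
      Module.finrank ℝ
        (Module.End.eigenspace (shapeOp (ptTangent Q z) (Q α)) (-1)) = l - m - 1 := by
  intro α hα
  have hcos : cos t ≠ 0 := (cos_pos_of_mem_Ioo ⟨by linarith, by linarith⟩).ne'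
  have hsin : sin t ≠ 0 := (sin_pos_of_pos_of_lt_pi ht0 (by linarith)).ne'
  have hcd : ((tan t + cot t) / 2) ^ 2 - ((tan t - cot t) / 2) ^ 2 = 1 := by
    rw [tan_eq_sin_div_cos, cot_eq_cos_div_sin]
    field_simp
    ring
  have hPsymm : ∀ β, (matLin (P β)).IsSymmetric := fun β =>
    Matrix.isSymmetric_toEuclideanLin_iff.mpr (Matrix.isHermitian_iff_isSymm.mpr (hSymm β))
  have hP : IsCliffordFamily fun β => matLin (P β) := fun β γ => by
    simpa only [map_add, map_mul, apply_ite, map_smul, map_one, map_zero,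
      toLpLinAlgEquiv_eq_matLin] using congrArg (Matrix.toLpLinAlgEquiv 2) (hCliff β γ)
  have hQ0 :
      matLin (Q 0) = ((tan t - cot t) / 2) • 1 + ((tan t + cot t) / 2) • matLin (P 0) := by
    simpa only [if_pos, ptQzero_eq_smul_one_add_smul, ← hP0, map_add, map_smul, map_one,
      toLpLinAlgEquiv_eq_matLin] using congrArg (Matrix.toLpLinAlgEquiv 2) (congrFun hQ 0)
  have hQP : ∀ β ≠ 0, matLin (Q β) = matLin (P β) := fun β hβ => by
    simp only [hQ, if_neg hβ]
  have key := finrank_eigenspace_shapeOperator_of_isCliffordFamily (Q := fun β => matLin (Q β))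
    hPsymm hP hcd hQ0 hQP (EuclideanSpace.norm_eq_one_of_sum_inl_inr hzx hzy) hM hα
  simp only [finrank_euclideanSpace, Fintype.card_sum, Fintype.card_fin] at key
  -- closes the goal because `shapeOp (ptTangent Q z) A` unfolds to `shapeOperator _ (matLin A)`
  rwa [show (l + l) / 2 - (m + 1) = l - m - 1 by omega, Nat.add_sub_cancel] at key

/-- in the Pinkall–Thorbergsson construction, for `z ∈ M₊ᵗ` and
`1 ≤ α ≤ m`, the shape operator of `M₊ᵗ ⊂ S^{2l-1}` w.r.t. the unit normal `Q_α z`,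
given by `X ↦ -(Q_α X)ᵀ` on `T_z M₊ᵗ`, has eigenvalues `1, 0, -1` with multiplicities
`l-m-1`, `m`, `l-m-1` respectively. -/
theorem statement7 (l m : ℕ) (hl : m + 2 ≤ l) (t : ℝ) (ht0 : 0 < t) (ht : t ≤ π / 4)
    (P : Fin (m + 1) → Matrix (Fin l ⊕ Fin l) (Fin l ⊕ Fin l) ℝ)
    (hSymm : ∀ α, (P α).IsSymm)
    (hCliff : ∀ α β, P α * P β + P β * P α =
      if α = β then (2 : ℝ) • (1 : Matrix (Fin l ⊕ Fin l) (Fin l ⊕ Fin l) ℝ) else 0)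
    (hP0 : P 0 = Matrix.fromBlocks 1 0 0 (-1))
    (Q : Fin (m + 1) → Matrix (Fin l ⊕ Fin l) (Fin l ⊕ Fin l) ℝ)
    (hQ : Q = fun α => if α = 0 then ptQzero l t else P α)
    (z : EuclideanSpace ℝ (Fin l ⊕ Fin l))
    (hzx : ∑ i, z (Sum.inl i) ^ 2 = Real.cos t ^ 2)
    (hzy : ∑ i, z (Sum.inr i) ^ 2 = Real.sin t ^ 2)
    (hM : ∀ α, inner ℝ z (matLin (Q α) z) = (0 : ℝ)) :
    ∀ α : Fin (m + 1), α ≠ 0 →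
      Module.finrank ℝ
        (Module.End.eigenspace (shapeOp (ptTangent Q z) (Q α)) 1) = l - m - 1 ∧
      Module.finrank ℝ
        (Module.End.eigenspace (shapeOp (ptTangent Q z) (Q α)) 0) = m ∧
      Module.finrank ℝ
        (Module.End.eigenspace (shapeOp (ptTangent Q z) (Q α)) (-1)) = l - m - 1 :=
  statement7_general l m t ht0 ht P hSymm hCliff hP0 Q hQ z hzx hzy hM

end
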